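/- Let u be a positive continuous function on the ball B_5(0) ⊂ ℝⁿ with u(0) = 1. Suppose there exist constants C ≥ 1, γ > 0, λ > 0 such that: (1) for all x with |x| ≤ 2 and all 0 < r < R ≤ 1, the oscillation of u over B_r(x) is at most C·(r/R)^γ · sup_{B_R(x)} u; and (2) for all x with |x| ≤ 2 and 0 < r ≤ 1, inf_{B_r(x)} u ≤ C·r^{-λ}. Then sup_{B_1(0)} u ≤ (2^{1+λ}·C)^{1+λ/γ}. -/

import Mathlib

/-!
Let `A = 2^(1+λ) C` and `K = A^(1+λ/γ)`. If `u x > K (2R)^(-λ)`, put `r = R A^(-1/γ)`. The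
bound on infima gives `inf_{B_r(x)} u ≤ u x / 2`, so the oscillation on `B_r(x)` exceeds `u x / 2`, and
oscillation decay with `(r/R)^γ = 1/A` forces `u > K R^(-λ)` somewhere in `B_R(x)`. Were
`sup_{B₁} u > K`, iterating along `R = 2^(-k)` would give points of `B₂` where `u` is unbounded,
contradicting the continuity of `u` on a compact neighbourhood of `B₂`.
-/

open Metric Set Filter

theorem mul_rpow_neg_inv_div_self_rpow {A R γ : ℝ} (hA : 0 < A) (hR : 0 < R) (hγ : γ ≠ 0) :
    (R * A ^ (-γ⁻¹) / R) ^ γ = A⁻¹ := by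
  rw [mul_div_cancel_left₀ _ hR.ne', ← Real.rpow_mul hA.le, neg_mul, inv_mul_cancel₀ hγ,
    Real.rpow_neg_one]

theorem mul_rpow_neg_inv_rpow_neg {A R γ lam : ℝ} (hA : 0 < A) (hR : 0 < R) :
    (R * A ^ (-γ⁻¹)) ^ (-lam) = R ^ (-lam) * A ^ (lam / γ) := by
  rw [Real.mul_rpow hR.le (by positivity), ← Real.rpow_mul hA.le]
  congr 2
  ring

section

variable {X : Type*} [PseudoMetricSpace X]

theorem lt_mul_sSup_image_ball_of_osc_le {u : X → ℝ} {x : X} {r R a ε : ℝ} (hr : 0 < r)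
    (hbdd : BddAbove (u '' ball x r))
    (hosc : sSup (u '' ball x r) - sInf (u '' ball x r) ≤ ε * sSup (u '' ball x R))
    (hinf : sInf (u '' ball x r) ≤ a) (hux : 2 * a < u x) :
    a < ε * sSup (u '' ball x R) := by
  have hux_le : u x ≤ sSup (u '' ball x r) :=
    le_csSup hbdd (mem_image_of_mem u (mem_ball_self hr))
  linarith

def OscDecay (u : X → ℝ) (x₀ : X) (C γ : ℝ) : Prop :=
  ∀ x, dist x x₀ ≤ 2 → ∀ r R : ℝ, 0 < r → r < R → R ≤ 1 →
    sSup (u '' ball x r) - sInf (u '' ball x r) ≤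
      C * (r / R) ^ γ * sSup (u '' ball x R)

def InfGrowth (u : X → ℝ) (x₀ : X) (C lam : ℝ) : Prop :=
  ∀ x, dist x x₀ ≤ 2 → ∀ r : ℝ, 0 < r → r ≤ 1 →
    sInf (u '' ball x r) ≤ C * r ^ (-lam)

noncomputable def harnackConst (C γ lam : ℝ) : ℝ :=
  ((2 : ℝ) ^ (1 + lam) * C) ^ (1 + lam / γ)

variable {u : X → ℝ} {x₀ : X} {C γ lam : ℝ}

theorem exists_lt_of_oscDecay_step (hC : 1 ≤ C) (hγ : 0 < γ) (hlam : 0 ≤ lam)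
    (hbdd : BddAbove (u '' ball x₀ 2)) (hosc : OscDecay u x₀ C γ)
    (hinf : InfGrowth u x₀ C lam)
    {R : ℝ} (hR : 0 < R) (hR1 : R ≤ 1) {x : X} (hx : dist x x₀ < 2 - 2 * R)
    (hux : harnackConst C γ lam * (2 * R) ^ (-lam) < u x) :
    ∃ y, dist y x₀ < 2 - R ∧ harnackConst C γ lam * R ^ (-lam) < u y := by
  set A := (2 : ℝ) ^ (1 + lam) * C with hA
  have hA_eq : A = 2 * 2 ^ lam * C := by rw [hA, Real.rpow_add two_pos, Real.rpow_one]
  have hA1 : 1 < A := one_lt_mul_of_lt_of_le (Real.one_lt_rpow one_lt_two (by linarith)) hC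
  have hA0 : 0 < A := by linarith
  have hK : harnackConst C γ lam = A * A ^ (lam / γ) := by
    rw [harnackConst, Real.rpow_add hA0, Real.rpow_one]
  set r := R * A ^ (-γ⁻¹) with hr
  have hr0 : 0 < r := by positivity
  have hrR : r < R :=
    mul_lt_of_lt_one_right hR (Real.rpow_lt_one_of_one_lt_of_neg hA1 (by simpa using hγ))
  have hx2 : dist x x₀ ≤ 2 := by linarith
  have hbdd_r : BddAbove (u '' ball x r) :=
    hbdd.mono (image_mono (ball_subset_ball' (by linarith)))
  have h2R : (2 * R) ^ (-lam) * 2 ^ lam = R ^ (-lam) := by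
    rw [Real.mul_rpow zero_le_two hR.le, Real.rpow_neg zero_le_two]
    field_simp
  have hux_twice : 2 * (C * r ^ (-lam)) < u x := by
    rw [hr, mul_rpow_neg_inv_rpow_neg hA0 hR, ← h2R]
    convert hux using 1
    rw [hK, hA_eq]; ring
  have hgrowth := lt_mul_sSup_image_ball_of_osc_le hr0 hbdd_r (hosc x hx2 r R hr0 hrR hR1)
    (hinf x hx2 r hr0 (hrR.le.trans hR1)) hux_twice
  rw [mul_rpow_neg_inv_div_self_rpow hA0 hR hγ.ne', mul_rpow_neg_inv_rpow_neg hA0 hR]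
    at hgrowth
  have hS : harnackConst C γ lam * R ^ (-lam) < sSup (u '' ball x R) := by
    have hC0 : 0 < C := by linarith
    calc harnackConst C γ lam * R ^ (-lam)
        = A / C * (C * (R ^ (-lam) * A ^ (lam / γ))) := by rw [hK]; field_simp
      _ < A / C * (C * A⁻¹ * sSup (u '' ball x R)) := by gcongr
      _ = sSup (u '' ball x R) := by field_simp
  obtain ⟨_, ⟨y, hy, rfl⟩, hKy⟩ :=
    exists_lt_of_lt_csSup ((nonempty_ball.mpr hR).image u) hS
  exact ⟨y, by linarith [dist_triangle y x x₀, mem_ball.mp hy], hKy⟩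

theorem exists_lt_of_oscDecay_iterate (hC : 1 ≤ C) (hγ : 0 < γ) (hlam : 0 ≤ lam)
    (hbdd : BddAbove (u '' ball x₀ 2)) (hosc : OscDecay u x₀ C γ)
    (hinf : InfGrowth u x₀ C lam)
    {x₁ : X} (hx₁ : dist x₁ x₀ < 1) (hux₁ : harnackConst C γ lam < u x₁) (k : ℕ) :
    ∃ x, dist x x₀ < 2 - (1 / 2) ^ k ∧
      harnackConst C γ lam * ((1 / 2) ^ k) ^ (-lam) < u x := by
  induction k with
  | zero => exact ⟨x₁, by norm_num [hx₁], by simpa using hux₁⟩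
  | succ k ih =>
    obtain ⟨x, hx, hux⟩ := ih
    have hhalf : ((1 : ℝ) / 2) ^ k = 2 * (1 / 2) ^ (k + 1) := by ring
    rw [hhalf] at hx hux
    exact exists_lt_of_oscDecay_step hC hγ hlam hbdd hosc hinf (by positivity)
      (pow_le_one₀ (by norm_num) (by norm_num)) hx hux

theorem sSup_image_ball_le_harnackConst (hC : 1 ≤ C) (hγ : 0 < γ) (hlam : 0 < lam)
    (hbdd : BddAbove (u '' ball x₀ 2)) (hosc : OscDecay u x₀ C γ)
    (hinf : InfGrowth u x₀ C lam) :
    sSup (u '' ball x₀ 1) ≤ harnackConst C γ lam := by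
  by_contra! hlt
  obtain ⟨_, ⟨x₁, hx₁, rfl⟩, hux₁⟩ :=
    exists_lt_of_lt_csSup ((nonempty_ball.mpr one_pos).image u) hlt
  have hK0 : 0 < harnackConst C γ lam := by unfold harnackConst; positivity
  have hblowup : Tendsto (fun k : ℕ ↦ harnackConst C γ lam * ((1 / 2 : ℝ) ^ k) ^ (-lam))
      atTop atTop :=
    ((tendsto_rpow_neg_nhdsGT_zero (neg_neg_of_pos hlam)).comp
      (tendsto_pow_atTop_nhdsWithin_zero_of_lt_one (by norm_num) (by norm_num))).const_mul_atTop
      hK0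
  obtain ⟨B, hB⟩ := hbdd
  obtain ⟨k, hk⟩ := (hblowup.eventually_gt_atTop B).exists
  obtain ⟨x, hx, hux⟩ :=
    exists_lt_of_oscDecay_iterate hC hγ hlam.le ⟨B, hB⟩ hosc hinf (mem_ball.mp hx₁) hux₁ k
  have hx₂ : dist x x₀ < 2 := by linarith [pow_pos (by norm_num : (0 : ℝ) < 1 / 2) k]
  have hxB : u x ≤ B := hB (mem_image_of_mem u (mem_ball.mpr hx₂))
  linarith

end

theorem stmt0_general (n : ℕ) (u : EuclideanSpace ℝ (Fin n) → ℝ)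
    (C γ lam : ℝ) (hC : 1 ≤ C) (hγ : 0 < γ) (hlam : 0 < lam)
    (hcont : ContinuousOn u (ball (0 : EuclideanSpace ℝ (Fin n)) 5))
    (hosc : ∀ x : EuclideanSpace ℝ (Fin n), ‖x‖ ≤ 2 → ∀ r R : ℝ, 0 < r → r < R → R ≤ 1 →
      sSup (u '' ball x r) - sInf (u '' ball x r) ≤ C * (r / R) ^ γ * sSup (u '' ball x R))
    (hinf : ∀ x : EuclideanSpace ℝ (Fin n), ‖x‖ ≤ 2 → ∀ r : ℝ, 0 < r → r ≤ 1 →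
      sInf (u '' ball x r) ≤ C * r ^ (-lam)) :
    sSup (u '' ball (0 : EuclideanSpace ℝ (Fin n)) 1)
      ≤ ((2 : ℝ) ^ (1 + lam) * C) ^ (1 + lam / γ) := by
  have hbdd : BddAbove (u '' ball 0 2) :=
    ((isCompact_closedBall 0 2).bddAbove_image
      (hcont.mono (closedBall_subset_ball (by norm_num)))).mono
      (image_mono ball_subset_closedBall)
  exact sSup_image_ball_le_harnackConst hC hγ hlam hbdd
    (fun x hx ↦ hosc x (by rwa [← dist_zero_right]))
    (fun x hx ↦ hinf x (by rwa [← dist_zero_right]))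

theorem stmt0 (n : ℕ) (u : EuclideanSpace ℝ (Fin n) → ℝ)
    (C γ lam : ℝ) (hC : 1 ≤ C) (hγ : 0 < γ) (hlam : 0 < lam)
    (hcont : ContinuousOn u (ball (0 : EuclideanSpace ℝ (Fin n)) 5))
    (hpos : ∀ x ∈ ball (0 : EuclideanSpace ℝ (Fin n)) 5, 0 < u x)
    (hnorm : u 0 = 1)
    (hosc : ∀ x : EuclideanSpace ℝ (Fin n), ‖x‖ ≤ 2 → ∀ r R : ℝ, 0 < r → r < R → R ≤ 1 →
      sSup (u '' ball x r) - sInf (u '' ball x r) ≤ C * (r / R) ^ γ * sSup (u '' ball x R))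
    (hinf : ∀ x : EuclideanSpace ℝ (Fin n), ‖x‖ ≤ 2 → ∀ r : ℝ, 0 < r → r ≤ 1 →
      sInf (u '' ball x r) ≤ C * r ^ (-lam)) :
    sSup (u '' ball (0 : EuclideanSpace ℝ (Fin n)) 1)
      ≤ ((2 : ℝ) ^ (1 + lam) * C) ^ (1 + lam / γ) :=
  stmt0_general n u C γ lam hC hγ hlam hcont hosc hinf
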